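/- arXiv:2403.16500 — 5 statements merged into one kernel-verified Lean document; each statement's English description precedes it below -/
import Mathlib

section
/- Let G be a locally compact group and θ : G × G → ℂ a normalized positive definite kernel such that sup_{g ∈ G} ‖g·θ − θ‖_cb < ε. If x, y ∈ G are such that |θ(y⁻¹xy, 1) − 1| < ε and |θ(y, 1) − 1| < ε, then |θ(x, 1) − 1| < 2ε + 4ε^{1/2}. -/
noncomputable section

/-- A normalized positive definite kernel on a topological group: `θ (x, y) = ⟪F x, F y⟫`
for some continuous map `F` into a complex Hilbert space with `‖F x‖ = 1` everywhere. -/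
def IsNormalizedPDKernel {G : Type*} [TopologicalSpace G] (θ : G × G → ℂ) : Prop :=
  ∃ (H : Type) (_ : NormedAddCommGroup H) (_ : InnerProductSpace ℂ H) (_ : CompleteSpace H) (F : G → H),
    Continuous F ∧ (∀ x, ‖F x‖ = 1) ∧ ∀ x y : G, θ (x, y) = inner ℂ (F x) (F y)

/-- `sup_{g ∈ G} ‖g·θ − θ‖_cb < ε`, where `‖·‖_cb` is the infimum of
`(sup ‖P‖)·(sup ‖Q‖)` over factorizations through a complex Hilbert space. -/
def SupCbLT {G : Type*} [Group G] (θ : G × G → ℂ) (ε : ℝ) : Prop :=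
  ∃ c : ℝ, c < ε ∧ ∀ g : G,
    ∃ (H : Type) (_ : NormedAddCommGroup H) (_ : InnerProductSpace ℂ H) (_ : CompleteSpace H)
      (P Q : G → H) (CP CQ : ℝ),
      (∀ x, ‖P x‖ ≤ CP) ∧ (∀ y, ‖Q y‖ ≤ CQ) ∧
      (∀ x y : G, θ (g * x, g * y) - θ (x, y) = inner ℂ (P x) (Q y)) ∧ CP * CQ ≤ c

/-!
Write `θ (a, b) = ⟪F a, F b⟫` with unit vectors `F a`. For unit vectors `‖u - v‖² ≤ 2 ‖⟪u, v⟫ - 1‖`,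
so `|θ (y, 1) - 1| < ε` gives `‖F y - F 1‖ ≤ 2√ε`, and translating by `x` gives
`|θ (xy, x) - 1| < 2ε`, hence `‖F (xy) - F x‖ ≤ 2√ε`. Together these move `θ (x, 1)` to within
`4√ε` of `θ (xy, y) = (y·θ)(y⁻¹xy, 1)`, which is within `ε` of `θ (y⁻¹xy, 1)`, itself within `ε`
of `1`.
-/

open scoped InnerProductSpace

theorem SupCbLT.norm_translate_sub_lt {G : Type*} [Group G] {θ : G × G → ℂ} {ε : ℝ}
    (h : SupCbLT θ ε) (g a b : G) : ‖θ (g * a, g * b) - θ (a, b)‖ < ε := by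
  obtain ⟨c, hcε, hg⟩ := h
  obtain ⟨H, _, _, _, P, Q, CP, CQ, hP, hQ, hPQ, hc⟩ := hg g
  calc ‖θ (g * a, g * b) - θ (a, b)‖ = ‖⟪P a, Q b⟫_ℂ‖ := by rw [hPQ]
    _ ≤ ‖P a‖ * ‖Q b‖ := norm_inner_le_norm _ _
    _ ≤ CP * CQ := mul_le_mul (hP a) (hQ b) (norm_nonneg _) ((norm_nonneg _).trans (hP a))
    _ < ε := hc.trans_lt hcε

section UnitVectors

variable {H : Type*} [NormedAddCommGroup H] [InnerProductSpace ℂ H]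

theorem norm_sub_sq_le_of_norm_eq_one {u v : H} (hu : ‖u‖ = 1) (hv : ‖v‖ = 1) :
    ‖u - v‖ ^ 2 ≤ 2 * ‖⟪u, v⟫_ℂ - 1‖ := by
  have hre : (1 - ⟪u, v⟫_ℂ).re ≤ ‖⟪u, v⟫_ℂ - 1‖ := by
    rw [← norm_neg, neg_sub]
    exact Complex.re_le_norm _
  rw [norm_sub_sq (𝕜 := ℂ), hu, hv, RCLike.re_to_complex]
  simp only [Complex.sub_re, Complex.one_re] at hre
  linarith

theorem norm_sub_le_two_mul_sqrt {u v : H} {δ : ℝ} (hu : ‖u‖ = 1) (hv : ‖v‖ = 1)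
    (h : ‖⟪u, v⟫_ℂ - 1‖ ≤ 2 * δ) : ‖u - v‖ ≤ 2 * Real.sqrt δ := by
  have hδ : 0 ≤ δ := by linarith [norm_nonneg (⟪u, v⟫_ℂ - 1)]
  refine (pow_le_pow_iff_left₀ (norm_nonneg _) (by positivity) two_ne_zero).mp ?_
  rw [mul_pow, Real.sq_sqrt hδ]
  linarith [norm_sub_sq_le_of_norm_eq_one hu hv]

theorem norm_inner_sub_inner_le {a a' b b' : H} (ha : ‖a‖ ≤ 1) (hb' : ‖b'‖ ≤ 1) :
    ‖⟪a, b⟫_ℂ - ⟪a', b'⟫_ℂ‖ ≤ ‖a - a'‖ + ‖b - b'‖ := by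
  have hsplit : ⟪a, b⟫_ℂ - ⟪a', b'⟫_ℂ = ⟪a, b - b'⟫_ℂ + ⟪a - a', b'⟫_ℂ := by
    rw [inner_sub_right, inner_sub_left]
    ring
  calc ‖⟪a, b⟫_ℂ - ⟪a', b'⟫_ℂ‖ ≤ ‖a‖ * ‖b - b'‖ + ‖a - a'‖ * ‖b'‖ := by
        rw [hsplit]
        exact (norm_add_le _ _).trans (add_le_add (norm_inner_le_norm _ _) (norm_inner_le_norm _ _))
    _ ≤ 1 * ‖b - b'‖ + ‖a - a'‖ * 1 := by gcongr
    _ = ‖a - a'‖ + ‖b - b'‖ := by ring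

end UnitVectors

theorem mautner_almost_invariance_general
    (G : Type) [Group G] [TopologicalSpace G]
    (θ : G × G → ℂ) (ε : ℝ)
    (hθ : IsNormalizedPDKernel θ)
    (hcb : SupCbLT θ ε)
    (x y : G)
    (hx : ‖θ (y⁻¹ * x * y, 1) - 1‖ < ε)
    (hy : ‖θ (y, 1) - 1‖ < ε) :
    ‖θ (x, 1) - 1‖ < 2 * ε + 4 * Real.sqrt ε := by
  obtain ⟨H, _, _, _, F, -, hF, hθF⟩ := hθ
  have hε : 0 ≤ ε := (norm_nonneg _).trans hx.le
  have hFy : ‖F y - F 1‖ ≤ 2 * Real.sqrt ε :=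
    norm_sub_le_two_mul_sqrt (hF _) (hF _) (by rw [← hθF]; linarith)
  have hFxy : ‖F (x * y) - F x‖ ≤ 2 * Real.sqrt ε := by
    have htr := hcb.norm_translate_sub_lt x y 1
    rw [mul_one] at htr
    refine norm_sub_le_two_mul_sqrt (hF _) (hF _) ?_
    rw [← hθF]
    linarith [norm_sub_le_norm_sub_add_norm_sub (θ (x * y, x)) (θ (y, 1)) 1]
  have hmove : ‖θ (x, 1) - θ (x * y, y)‖ ≤ 4 * Real.sqrt ε := by
    rw [hθF, hθF]
    have := norm_inner_sub_inner_le (b := F 1) (a' := F (x * y)) (hF x).le (hF y).le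
    rw [norm_sub_rev (F x), norm_sub_rev (F 1)] at this
    linarith
  have hconj : ‖θ (x * y, y) - θ (y⁻¹ * x * y, 1)‖ < ε := by
    have htr := hcb.norm_translate_sub_lt y (y⁻¹ * x * y) 1
    rwa [show y * (y⁻¹ * x * y) = x * y by group, mul_one] at htr
  linarith [norm_sub_le_norm_sub_add_norm_sub (θ (x, 1)) (θ (x * y, y)) 1,
    norm_sub_le_norm_sub_add_norm_sub (θ (x * y, y)) (θ (y⁻¹ * x * y, 1)) 1]

/-- Mautner-type lemma: let `G` be a locally compact group and `θ` a normalized positive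
definite kernel with `sup_g ‖g·θ − θ‖_cb < ε`. If `|θ(y⁻¹xy, 1) − 1| < ε` and
`|θ(y, 1) − 1| < ε`, then `|θ(x, 1) − 1| < 2ε + 4√ε`. -/
theorem mautner_almost_invariance
    (G : Type) [Group G] [TopologicalSpace G] [IsTopologicalGroup G] [T2Space G]
    [LocallyCompactSpace G]
    (θ : G × G → ℂ) (ε : ℝ)
    (hθ : IsNormalizedPDKernel θ)
    (hcb : SupCbLT θ ε)
    (x y : G)
    (hx : ‖θ (y⁻¹ * x * y, 1) - 1‖ < ε)
    (hy : ‖θ (y, 1) - 1‖ < ε) :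
    ‖θ (x, 1) - 1‖ < 2 * ε + 4 * Real.sqrt ε :=
  mautner_almost_invariance_general G θ ε hθ hcb x y hx hy
end
end

section
/- Let G₁ and G₂ be locally compact groups and φ : G₁ → G₂ a surjective quasi-homomorphism. If G₁ has property (TTT), then G₂ has property (TTT). -/
noncomputable section

/-- A map is Borel measurable with respect to the Borel σ-algebras of the topologies. -/
def BorelMeasurableMap {X Y : Type*} [TopologicalSpace X] [TopologicalSpace Y] (f : X → Y) : Prop :=
  @Measurable X Y (borel X) (borel Y) f

/-- `(b, π)` is a wq-cocycle on `G`: `π` is a Borel map into the unitary group of the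
complex Hilbert space `H`, `b` is Borel, locally bounded, and has finite defect. -/
structure IsWqCocycle {G : Type*} [Group G] [TopologicalSpace G]
    {H : Type*} [NormedAddCommGroup H] [InnerProductSpace ℂ H] [CompleteSpace H]
    (b : G → H) (π : G → H ≃ₗᵢ[ℂ] H) : Prop where
  borel_b : BorelMeasurableMap b
  borel_pi : ∀ ξ : H, BorelMeasurableMap fun g => π g ξ
  loc_bdd : ∀ K : Set G, IsCompact K → ∃ C : ℝ, ∀ g ∈ K, ‖b g‖ ≤ C
  defect : ∃ D : ℝ, ∀ g h : G, ‖b (g * h) - b g - π g (b h)‖ ≤ D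

/-- Property (TTT): every wq-cocycle is bounded. -/
def HasTTT (G : Type*) [Group G] [TopologicalSpace G] : Prop :=
  ∀ (H : Type) [NormedAddCommGroup H] [InnerProductSpace ℂ H] [CompleteSpace H]
    (b : G → H) (π : G → H ≃ₗᵢ[ℂ] H),
    IsWqCocycle b π → ∃ C : ℝ, ∀ g : G, ‖b g‖ ≤ C

/-- A quasi-homomorphism between topological groups: a Borel map which is regular
(images of compact sets are relatively compact) and whose defect set
`{φ(gh)⁻¹ φ(g) φ(h)}` is relatively compact. -/
structure IsQuasiHom {G₁ G₂ : Type*} [Group G₁] [TopologicalSpace G₁]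
    [Group G₂] [TopologicalSpace G₂] (φ : G₁ → G₂) : Prop where
  borel : BorelMeasurableMap φ
  regular : ∀ K : Set G₁, IsCompact K → IsCompact (closure (φ '' K))
  defect : IsCompact (closure {x : G₂ | ∃ g h : G₁, x = (φ (g * h))⁻¹ * (φ g * φ h)})

/-! A wq-cocycle `(b, π)` on `G₂` pulls back along `φ` to the wq-cocycle `(b ∘ φ, π ∘ φ)` on `G₁`:
writing `φ g * φ h = φ (g * h) * d` with `d` in the relatively compact defect set of `φ`,
the defect of the pullback is at most twice that of `b` plus the bound of `b` on that set.
By (TTT) for `G₁` the pullback is bounded, and surjectivity of `φ` makes `b` bounded. -/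

section

variable {G H : Type*} [Mul G] [NormedAddCommGroup H] [NormedSpace ℂ H]
  {b : G → H} {π : G → H ≃ₗᵢ[ℂ] H} {D : ℝ}

theorem norm_sub_sub_le_of_mul_eq (hD : ∀ g h, ‖b (g * h) - b g - π g (b h)‖ ≤ D)
    {x y z d : G} (hzd : z * d = x * y) :
    ‖b z - b x - π x (b y)‖ ≤ D + ‖b d‖ + D :=
  calc ‖b z - b x - π x (b y)‖
      = ‖-(b (z * d) - b z - π z (b d)) - π z (b d) + (b (x * y) - b x - π x (b y))‖ := by
        rw [hzd]; congr 1; abel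
    _ ≤ ‖b (z * d) - b z - π z (b d)‖ + ‖π z (b d)‖ + ‖b (x * y) - b x - π x (b y)‖ := by
        grw [norm_add_le, norm_sub_le, norm_neg]
    _ ≤ D + ‖b d‖ + D := by
        rw [(π z).norm_map]; gcongr <;> apply hD

end

theorem IsWqCocycle.comp_quasiHom {G₁ G₂ : Type*} [Group G₁] [TopologicalSpace G₁]
    [Group G₂] [TopologicalSpace G₂]
    {H : Type*} [NormedAddCommGroup H] [InnerProductSpace ℂ H] [CompleteSpace H]
    {b : G₂ → H} {π : G₂ → H ≃ₗᵢ[ℂ] H} (hb : IsWqCocycle b π) {φ : G₁ → G₂}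
    (hφ : IsQuasiHom φ) : IsWqCocycle (b ∘ φ) (π ∘ φ) where
  borel_b := hb.borel_b.comp hφ.borel
  borel_pi ξ := (hb.borel_pi ξ).comp hφ.borel
  loc_bdd K hK := by
    obtain ⟨C, hC⟩ := hb.loc_bdd _ (hφ.regular K hK)
    exact ⟨C, fun g hg => hC _ (subset_closure ⟨g, hg, rfl⟩)⟩
  defect := by
    obtain ⟨M, hM⟩ := hb.loc_bdd _ hφ.defect
    obtain ⟨D, hD⟩ := hb.defect
    refine ⟨D + M + D, fun g h => ?_⟩
    calc ‖(b ∘ φ) (g * h) - (b ∘ φ) g - (π ∘ φ) g ((b ∘ φ) h)‖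
        ≤ D + ‖b ((φ (g * h))⁻¹ * (φ g * φ h))‖ + D :=
          norm_sub_sub_le_of_mul_eq hD (mul_inv_cancel_left _ _)
      _ ≤ D + M + D := by grw [hM _ (subset_closure ⟨g, h, rfl⟩)]

theorem hasTTT_of_surjective_quasiHom_general
    (G₁ : Type) [Group G₁] [TopologicalSpace G₁]
    (G₂ : Type) [Group G₂] [TopologicalSpace G₂]
    (φ : G₁ → G₂) (hφ : IsQuasiHom φ) (hsurj : Function.Surjective φ)
    (hG₁ : HasTTT G₁) : HasTTT G₂ := by
  intro H _ _ _ b π hb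
  obtain ⟨C, hC⟩ := hG₁ H (b ∘ φ) (π ∘ φ) (hb.comp_quasiHom hφ)
  exact ⟨C, hsurj.forall.2 hC⟩

/-- Let `G₁`, `G₂` be locally compact groups and `φ : G₁ → G₂` a surjective
quasi-homomorphism. If `G₁` has property (TTT), then `G₂` has property (TTT). -/
theorem hasTTT_of_surjective_quasiHom
    (G₁ : Type) [Group G₁] [TopologicalSpace G₁] [IsTopologicalGroup G₁] [LocallyCompactSpace G₁]
    (G₂ : Type) [Group G₂] [TopologicalSpace G₂] [IsTopologicalGroup G₂] [LocallyCompactSpace G₂]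
    (φ : G₁ → G₂) (hφ : IsQuasiHom φ) (hsurj : Function.Surjective φ)
    (hG₁ : HasTTT G₁) : HasTTT G₂ :=
  hasTTT_of_surjective_quasiHom_general G₁ G₂ φ hφ hsurj hG₁
end
end

section
/- Let G be a second countable locally compact group and N a closed normal subgroup of G. If N and the quotient group G/N both have property (TTT), then G has property (TTT). -/
noncomputable section

/-!
Restricted to `N`, a wq-cocycle `b` of `G` is a wq-cocycle of `N`, hence bounded on `N`.
Composed with a Borel section `s` of `G → G ⧸ N` that maps compact sets into compact sets, it
is a wq-cocycle of `G ⧸ N`: as `s (x * y)⁻¹ * (s x * s y) ∈ N`, its defect is at most twice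
that of `b` plus the bound on `N`. So `b ∘ s` is bounded too, and writing `g = s (g N) * n`
with `n ∈ N` bounds `b g`.

The section of `p : G → G ⧸ N` is chosen fibrewise. Fix a compact `C` and closed sets `Z k`
such that every open set is the union of the `Z k` it contains; starting from `C ∩ p⁻¹ {y}`,
intersect successively with `Z k` whenever the result stays nonempty. The nested compact sets
have a common point `s y`, and `s y ∈ Z k` exactly when the `k`-th cut was made, which is the
event that `y` lies in the image of one of countably many compact sets. Exhausting `G` by
compact sets glues these partial sections together.
-/

open Set Topology

theorem exists_seq_isClosed_network (X : Type*) [TopologicalSpace X] [SecondCountableTopology X]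
    [RegularSpace X] :
    ∃ Z : ℕ → Set X, (∀ k, IsClosed (Z k)) ∧
      ∀ ⦃O : Set X⦄, IsOpen O → ∀ x ∈ O, ∃ k, x ∈ Z k ∧ Z k ⊆ O := by
  open TopologicalSpace in
  obtain ⟨Z, hZ⟩ := ((countable_countableBasis X).image closure).insert ∅ |>.exists_eq_range
    (insert_nonempty _ _)
  refine ⟨Z, fun k => ?_, fun O hO x hx => ?_⟩
  · obtain h | ⟨b, -, h⟩ : Z k ∈ insert ∅ (closure '' countableBasis X) := hZ ▸ mem_range_self k
    · exact h ▸ isClosed_empty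
    · exact h ▸ isClosed_closure
  · obtain ⟨b, hb, hxb, hbO⟩ :=
      (isBasis_countableBasis X).exists_closure_subset (hO.mem_nhds hx)
    obtain ⟨k, hk⟩ : closure b ∈ range Z := hZ ▸ mem_insert_of_mem _ (mem_image_of_mem _ hb)
    exact ⟨k, hk ▸ subset_closure hxb, hk ▸ hbO⟩

theorem measurable_of_measurableSet_preimage_network {X Y : Type*} [TopologicalSpace X]
    [MeasurableSpace X] [BorelSpace X] [MeasurableSpace Y] {Z : ℕ → Set X}
    (hZ : ∀ ⦃O : Set X⦄, IsOpen O → ∀ x ∈ O, ∃ k, x ∈ Z k ∧ Z k ⊆ O) {f : Y → X}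
    (hf : ∀ k, MeasurableSet (f ⁻¹' Z k)) : Measurable f := by
  refine measurable_of_isOpen fun O hO => ?_
  have : f ⁻¹' O = ⋃ (k : ℕ) (_ : Z k ⊆ O), f ⁻¹' Z k := by
    refine Subset.antisymm (fun y hy => ?_) (iUnion₂_subset fun k hk => preimage_mono hk)
    obtain ⟨k, hyk, hkO⟩ := hZ hO (f y) hy
    exact mem_iUnion₂.2 ⟨k, hkO, hyk⟩
  rw [this]
  exact .iUnion fun k => .iUnion fun _ => hf k

theorem MeasurableSet.setOf_comp_countable {Y α : Type*} [MeasurableSpace Y] [Countable α]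
    {c : Y → α} (hc : ∀ a, MeasurableSet {y | c y = a}) {P : α → Y → Prop}
    (hP : ∀ a, MeasurableSet {y | P a y}) : MeasurableSet {y | P (c y) y} := by
  have : {y | P (c y) y} = ⋃ a, {y | c y = a} ∩ {y | P a y} := by
    ext y
    simp
  rw [this]
  exact .iUnion fun a => (hc a).inter (hP a)

section Refinement

variable {X Y : Type*}

def refinedPiece (C : Set X) (Z : ℕ → Set X) (S : Finset ℕ) : Set X := C ∩ ⋂ i ∈ S, Z i

-- The indices `k` at which the piece was cut down to `Z k`; a countable state space keeps
-- every step measurable in `y`.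
open Classical in
def refinementSteps (p : X → Y) (C : Set X) (Z : ℕ → Set X) (y : Y) : ℕ → Finset ℕ
  | 0 => ∅
  | k + 1 =>
    if y ∈ p '' refinedPiece C Z (insert k (refinementSteps p C Z y k)) then
      insert k (refinementSteps p C Z y k)
    else refinementSteps p C Z y k

variable {p : X → Y} {C : Set X} {Z : ℕ → Set X}

theorem refinedPiece_anti : Antitone (refinedPiece C Z) := fun _ _ hST =>
  inter_subset_inter_right _ (biInter_subset_biInter_left hST)

theorem isCompact_refinedPiece [TopologicalSpace X] (hC : IsCompact C)
    (hZ : ∀ k, IsClosed (Z k)) (S : Finset ℕ) : IsCompact (refinedPiece C Z S) :=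
  hC.inter_right (isClosed_biInter fun i _ => hZ i)

theorem refinementSteps_mono (y : Y) : Monotone (refinementSteps p C Z y) := by
  refine monotone_nat_of_le_succ fun k => ?_
  rw [refinementSteps]
  split_ifs
  exacts [Finset.subset_insert _ _, le_rfl]

theorem mem_image_refinedPiece_refinementSteps {y : Y} (hy : y ∈ p '' C) (k : ℕ) :
    y ∈ p '' refinedPiece C Z (refinementSteps p C Z y k) := by
  induction k with
  | zero => simpa [refinementSteps, refinedPiece] using hy
  | succ k ih =>
    rw [refinementSteps]
    split_ifs with h
    exacts [h, ih]

theorem mem_iff_of_forall_mem_refinedPiece {y : Y} {x : X} (hx : p x = y)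
    (hxS : ∀ k, x ∈ refinedPiece C Z (refinementSteps p C Z y k)) (k : ℕ) :
    x ∈ Z k ↔ y ∈ p '' refinedPiece C Z (insert k (refinementSteps p C Z y k)) := by
  constructor
  · intro hxk
    refine ⟨x, ⟨(hxS k).1, ?_⟩, hx⟩
    simp only [Finset.mem_insert, iInter_iInter_eq_or_left]
    exact ⟨hxk, (hxS k).2⟩
  · intro h
    have := (hxS (k + 1)).2
    rw [refinementSteps, if_pos h] at this
    exact mem_iInter₂.1 this k (Finset.mem_insert_self _ _)

theorem measurableSet_refinementSteps_eq [TopologicalSpace X] [TopologicalSpace Y]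
    [MeasurableSpace Y] [OpensMeasurableSpace Y] [T2Space Y] (hp : Continuous p)
    (hC : IsCompact C) (hZ : ∀ k, IsClosed (Z k)) (k : ℕ) (S : Finset ℕ) :
    MeasurableSet {y | refinementSteps p C Z y k = S} := by
  induction k generalizing S with
  | zero => simpa only [refinementSteps] using .const _
  | succ k ih =>
    classical
    simp only [refinementSteps]
    refine MeasurableSet.setOf_comp_countable (P := fun T y =>
      (if y ∈ p '' refinedPiece C Z (insert k T) then insert k T else T) = S) ih fun T => ?_
    have hT : MeasurableSet (p '' refinedPiece C Z (insert k T)) :=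
      ((isCompact_refinedPiece hC hZ _).image hp).isClosed.measurableSet
    have : {y | (if y ∈ p '' refinedPiece C Z (insert k T) then insert k T else T) = S} =
        (p '' refinedPiece C Z (insert k T)).ite {_y | insert k T = S} {_y | T = S} := by
      ext y
      by_cases hy : y ∈ p '' refinedPiece C Z (insert k T) <;> simp [Set.ite, hy, -mem_image]
    rw [this]
    exact hT.ite (.const _) (.const _)

end Refinement

theorem exists_measurable_section_on_image_of_isCompact {X Y : Type*} [TopologicalSpace X]
    [T2Space X] [RegularSpace X] [SecondCountableTopology X] [Nonempty X] [MeasurableSpace X] [BorelSpace X]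
    [TopologicalSpace Y] [T2Space Y] [MeasurableSpace Y] [OpensMeasurableSpace Y]
    {p : X → Y} (hp : Continuous p) {C : Set X} (hC : IsCompact C) :
    ∃ s : Y → X, Measurable s ∧ ∀ y ∈ p '' C, p (s y) = y ∧ s y ∈ C := by
  classical
  obtain ⟨Z, hZc, hZ⟩ := exists_seq_isClosed_network X
  set F : Y → ℕ → Set X := fun y k => p ⁻¹' {y} ∩ refinedPiece C Z (refinementSteps p C Z y k)
  have hF : ∀ y ∈ p '' C, (⋂ k, F y k).Nonempty := fun y hy =>
    IsCompact.nonempty_iInter_of_sequence_nonempty_isCompact_isClosed (F y)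
      (fun k => inter_subset_inter_right _ (refinedPiece_anti (refinementSteps_mono y k.le_succ)))
      (fun k => by
        obtain ⟨x, hx, rfl⟩ := mem_image_refinedPiece_refinementSteps hy k
        exact ⟨x, rfl, hx⟩)
      ((isCompact_refinedPiece hC hZc _).inter_left (isClosed_singleton.preimage hp))
      (fun k => (isClosed_singleton.preimage hp).inter (isCompact_refinedPiece hC hZc _).isClosed)
  let s y := if hy : y ∈ p '' C then (hF y hy).some else Classical.arbitrary X
  have hs : ∀ y (hy : y ∈ p '' C) k, p (s y) = y ∧
      s y ∈ refinedPiece C Z (refinementSteps p C Z y k) := fun y hy k => by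
    simp only [s, dif_pos hy]
    exact mem_iInter.1 (hF y hy).some_mem k
  refine ⟨s, measurable_of_measurableSet_preimage_network hZ fun k => ?_,
    fun y hy => ⟨(hs y hy 0).1, (hs y hy 0).2.1⟩⟩
  have hpre : s ⁻¹' Z k =
      {y | y ∈ p '' refinedPiece C Z (insert k (refinementSteps p C Z y k))} ∪
        (p '' C)ᶜ ∩ {_y | Classical.arbitrary X ∈ Z k} := by
    ext y
    by_cases hy : y ∈ p '' C
    · simp only [mem_preimage, mem_union, mem_ofPred_eq, mem_inter_iff, mem_compl_iff, hy,
        not_true_eq_false, false_and, or_false]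
      exact mem_iff_of_forall_mem_refinedPiece (hs y hy 0).1 (fun k => (hs y hy k).2) k
    · have : y ∉ p '' refinedPiece C Z (insert k (refinementSteps p C Z y k)) :=
        fun h => hy (image_mono inter_subset_left h)
      simp only [s, mem_preimage, mem_union, mem_ofPred_eq, mem_inter_iff, mem_compl_iff, hy,
        this, dif_neg, not_false_eq_true, true_and, false_or]
  rw [hpre]
  refine .union (.setOf_comp_countable (P := fun T y => y ∈ p '' refinedPiece C Z (insert k T))
    (measurableSet_refinementSteps_eq hp hC hZc k) fun T => ?_)
    ((hC.image hp).isClosed.measurableSet.compl.inter (.const _))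
  exact ((isCompact_refinedPiece hC hZc _).image hp).isClosed.measurableSet

theorem IsOpenQuotientMap.exists_borelMeasurableMap_section {X Y : Type*} [TopologicalSpace X]
    [T2Space X] [LocallyCompactSpace X] [SecondCountableTopology X] [Nonempty X]
    [TopologicalSpace Y] [T2Space Y] {p : X → Y} (hp : IsOpenQuotientMap p) :
    ∃ s : Y → X, BorelMeasurableMap s ∧ Function.RightInverse s p ∧
      ∀ L : Set Y, IsCompact L → ∃ L' : Set X, IsCompact L' ∧ MapsTo s L L' := by
  classical
  borelize X Y
  let K := CompactExhaustion.choice X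
  choose s hs_meas hs using fun n =>
    exists_measurable_section_on_image_of_isCompact hp.continuous (K.isCompact n)
  have hK : ∀ y, ∃ n, y ∈ p '' K n := fun y => by
    obtain ⟨x, rfl⟩ := hp.surjective y
    obtain ⟨n, hn⟩ := K.exists_mem x
    exact ⟨n, mem_image_of_mem p hn⟩
  refine ⟨fun y => s (Nat.find (hK y)) y,
    .find hs_meas (fun n => ((K.isCompact n).image hp.continuous).isClosed.measurableSet) hK,
    fun y => (hs _ y (Nat.find_spec (hK y))).1, fun L hL => ?_⟩
  obtain ⟨m, hm⟩ := hL.elim_directed_cover (fun n => p '' interior (K n))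
    (fun n => hp.isOpenMap _ isOpen_interior)
    (fun y _ => by
      obtain ⟨x, rfl⟩ := hp.surjective y
      obtain ⟨n, hn⟩ := K.exists_mem x
      exact mem_iUnion.2 ⟨n + 1, mem_image_of_mem p (K.subset_interior_succ n hn)⟩)
    (Monotone.directed_le fun _ _ hmn => image_mono (interior_mono (K.subset hmn)))
  refine ⟨K m, K.isCompact m, fun y hy =>
    K.subset (Nat.find_min' (hK y) ?_) (hs _ y (Nat.find_spec (hK y))).2⟩
  exact image_mono interior_subset (hm hy)

section Cocycles

variable {G : Type*} [Group G] {H : Type*} [SeminormedAddCommGroup H] [Module ℂ H]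
  {b : G → H} {π : G → H ≃ₗᵢ[ℂ] H} {D : ℝ}

theorem norm_sub_le_of_defect_le (hD : ∀ g h, ‖b (g * h) - b g - π g (b h)‖ ≤ D) (g h : G) :
    ‖b (g * h) - b g‖ ≤ D + ‖b h‖ :=
  calc ‖b (g * h) - b g‖ = ‖(b (g * h) - b g - π g (b h)) + π g (b h)‖ := by rw [sub_add_cancel]
    _ ≤ D + ‖b h‖ := by
      grw [norm_add_le, LinearIsometryEquiv.norm_map, hD g h]

variable {Q : Type*} [Group Q] {q : G →* Q} {s : Q → G} {CN : ℝ}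

theorem norm_le_of_rightInverse_of_ker (hD : ∀ g h, ‖b (g * h) - b g - π g (b h)‖ ≤ D)
    (hs : Function.RightInverse s q) (hN : ∀ n ∈ q.ker, ‖b n‖ ≤ CN) {CQ : ℝ}
    (hQ : ∀ x, ‖b (s x)‖ ≤ CQ) (g : G) : ‖b g‖ ≤ CQ + D + CN := by
  have hm : (s (q g))⁻¹ * g ∈ q.ker := q.eq_iff.1 (hs (q g)).symm
  have := norm_sub_le_of_defect_le hD (s (q g)) ((s (q g))⁻¹ * g)
  rw [mul_inv_cancel_left] at this
  calc ‖b g‖ ≤ ‖b (s (q g))‖ + ‖b g - b (s (q g))‖ := norm_le_insert' _ _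
    _ ≤ CQ + (D + CN) := add_le_add (hQ _) (this.trans (add_le_add le_rfl (hN _ hm)))
    _ = CQ + D + CN := by ring

theorem defect_comp_section_le (hD : ∀ g h, ‖b (g * h) - b g - π g (b h)‖ ≤ D)
    (hs : Function.RightInverse s q) (hN : ∀ n ∈ q.ker, ‖b n‖ ≤ CN) (x y : Q) :
    ‖b (s (x * y)) - b (s x) - π (s x) (b (s y))‖ ≤ D + (D + CN) := by
  set m := (s (x * y))⁻¹ * (s x * s y)
  have hm : m ∈ q.ker := q.eq_iff.1 (by rw [map_mul, hs, hs, hs])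
  have := norm_sub_le_of_defect_le hD (s (x * y)) m
  rw [mul_inv_cancel_left] at this
  calc ‖b (s (x * y)) - b (s x) - π (s x) (b (s y))‖
      = ‖(b (s x * s y) - b (s x) - π (s x) (b (s y))) - (b (s x * s y) - b (s (x * y)))‖ := by
        congr 1; abel
    _ ≤ D + (D + CN) := (norm_sub_le _ _).trans
        (add_le_add (hD _ _) (this.trans (add_le_add le_rfl (hN m hm))))

end Cocycles

namespace IsWqCocycle

variable {G : Type*} [Group G] [TopologicalSpace G] {H : Type*} [NormedAddCommGroup H]
  [InnerProductSpace ℂ H] [CompleteSpace H] {b : G → H} {π : G → H ≃ₗᵢ[ℂ] H}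

theorem comp_monoidHom {G' : Type*} [Group G'] [TopologicalSpace G'] (hb : IsWqCocycle b π)
    {f : G' →* G} (hf : Continuous f) : IsWqCocycle (fun g => b (f g)) (fun g => π (f g)) where
  borel_b := hb.borel_b.comp hf.borel_measurable
  borel_pi ξ := (hb.borel_pi ξ).comp hf.borel_measurable
  loc_bdd K hK := by
    obtain ⟨C, hC⟩ := hb.loc_bdd _ (hK.image hf)
    exact ⟨C, fun g hg => hC _ (mem_image_of_mem f hg)⟩
  defect := by
    obtain ⟨D, hD⟩ := hb.defect
    exact ⟨D, fun g h => by simpa only [map_mul] using hD (f g) (f h)⟩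

theorem comp_section {Q : Type*} [Group Q] [TopologicalSpace Q] (hb : IsWqCocycle b π)
    {q : G →* Q} {s : Q → G} (hs_meas : BorelMeasurableMap s) (hs : Function.RightInverse s q)
    (hs_cpt : ∀ L : Set Q, IsCompact L → ∃ L' : Set G, IsCompact L' ∧ MapsTo s L L') {CN : ℝ}
    (hN : ∀ n ∈ q.ker, ‖b n‖ ≤ CN) : IsWqCocycle (fun x => b (s x)) (fun x => π (s x)) where
  borel_b := hb.borel_b.comp hs_meas
  borel_pi ξ := (hb.borel_pi ξ).comp hs_meas
  loc_bdd L hL := by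
    obtain ⟨L', hL', hsL⟩ := hs_cpt L hL
    obtain ⟨C, hC⟩ := hb.loc_bdd L' hL'
    exact ⟨C, fun x hx => hC _ (hsL hx)⟩
  defect := by
    obtain ⟨D, hD⟩ := hb.defect
    exact ⟨_, defect_comp_section_le hD hs hN⟩

end IsWqCocycle

/-- Let `G` be a second countable locally compact group and `N` a closed normal subgroup.
If `N` and `G/N` have property (TTT), then so does `G`. -/
theorem hasTTT_of_extension
    (G : Type) [Group G] [TopologicalSpace G] [IsTopologicalGroup G] [T2Space G]
    [LocallyCompactSpace G] [SecondCountableTopology G]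
    (N : Subgroup G) [N.Normal] (hclosed : IsClosed (N : Set G))
    (hN : HasTTT N) (hQ : HasTTT (G ⧸ N)) : HasTTT G := by
  intro H _ _ _ b π hb
  obtain ⟨D, hD⟩ := hb.defect
  obtain ⟨s, hs_meas, hs, hs_cpt⟩ :=
    (QuotientGroup.isOpenQuotientMap_mk (N := N)).exists_borelMeasurableMap_section
  obtain ⟨CN, hCN⟩ := hN H _ _ (hb.comp_monoidHom (f := N.subtype) continuous_subtype_val)
  have hker : ∀ n ∈ (QuotientGroup.mk' N).ker, ‖b n‖ ≤ CN := fun n hn =>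
    hCN ⟨n, (QuotientGroup.ker_mk' N) ▸ hn⟩
  obtain ⟨CQ, hCQ⟩ := hQ H _ _ (hb.comp_section hs_meas hs hs_cpt hker)
  exact ⟨_, norm_le_of_rightInverse_of_ker hD hs hker hCQ⟩
end
end

section
/- Let G be a locally compact second countable group, N a closed normal subgroup, and σ : G/N → G a Borel section of the quotient map which is regular (the image of every compact subset of G/N is relatively compact in G). If (b, π) is a wq-cocycle on G such that b is bounded on N, then (b∘σ, π∘σ) is a wq-cocycle on G/N. -/
/-!
Write `n = σ(xy)⁻¹ σ(x) σ(y)`, an element of `N`. The defect inequality at the pair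
`(σ(xy), n)` shows that `b(σ(x)σ(y)) = b(σ(xy) n)` differs from `b(σ(xy))` by at most
`sup_N ‖b‖ + D`, and the defect inequality at `(σ(x), σ(y))` accounts for another `D`.
-/

noncomputable section

section Defect

variable {G R E : Type*} [Group G] [Semiring R] [SeminormedAddCommGroup E] [Module R E]
  {b : G → E} {π : G → E ≃ₗᵢ[R] E} {D : ℝ}

theorem norm_sub_mul_le_of_defect_le (hD : ∀ g h, ‖b (g * h) - b g - π g (b h)‖ ≤ D)
    (g n : G) : ‖b g - b (g * n)‖ ≤ ‖b n‖ + D := by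
  have hsplit : b g - b (g * n) = -π g (b n) - (b (g * n) - b g - π g (b n)) := by abel
  calc ‖b g - b (g * n)‖ ≤ ‖π g (b n)‖ + ‖b (g * n) - b g - π g (b n)‖ := by
        rw [hsplit, ← norm_neg (π g (b n))]
        exact norm_sub_le _ _
    _ ≤ ‖b n‖ + D := by rw [LinearIsometryEquiv.norm_map]; gcongr; exact hD g n

theorem QuotientGroup.inv_mul_mem_of_section {N : Subgroup G} [N.Normal] {σ : G ⧸ N → G}
    (hσ : ∀ x, (σ x : G ⧸ N) = x) (x y : G ⧸ N) : (σ (x * y))⁻¹ * (σ x * σ y) ∈ N := by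
  rw [← QuotientGroup.eq, QuotientGroup.mk_mul, hσ, hσ, hσ]

theorem norm_defect_comp_section_le {N : Subgroup G} [N.Normal] {σ : G ⧸ N → G}
    (hσ : ∀ x, (σ x : G ⧸ N) = x) (hD : ∀ g h, ‖b (g * h) - b g - π g (b h)‖ ≤ D)
    {C : ℝ} (hC : ∀ n ∈ N, ‖b n‖ ≤ C) (x y : G ⧸ N) :
    ‖b (σ (x * y)) - b (σ x) - π (σ x) (b (σ y))‖ ≤ C + 2 * D := by
  set n := (σ (x * y))⁻¹ * (σ x * σ y)
  have hmul : σ x * σ y = σ (x * y) * n := by simp [n]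
  have hn : ‖b (σ (x * y)) - b (σ x * σ y)‖ ≤ C + D := by
    rw [hmul]
    exact (norm_sub_mul_le_of_defect_le hD _ n).trans
      (by gcongr; exact hC n (QuotientGroup.inv_mul_mem_of_section hσ x y))
  calc ‖b (σ (x * y)) - b (σ x) - π (σ x) (b (σ y))‖
      = ‖(b (σ (x * y)) - b (σ x * σ y)) + (b (σ x * σ y) - b (σ x) - π (σ x) (b (σ y)))‖ := by
        congr 1; abel
    _ ≤ (C + D) + D := norm_add_le_of_le hn (hD _ _)
    _ = C + 2 * D := by ring

end Defect

theorem wqCocycle_descends_along_section_general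
    (G : Type) [Group G] [TopologicalSpace G]
    (N : Subgroup G) [N.Normal]
    (σ : G ⧸ N → G)
    (hσ_borel : BorelMeasurableMap σ)
    (hσ_sect : ∀ x : G ⧸ N, (QuotientGroup.mk (σ x) : G ⧸ N) = x)
    (hσ_reg : ∀ K : Set (G ⧸ N), IsCompact K → IsCompact (closure (σ '' K)))
    (H : Type) [NormedAddCommGroup H] [InnerProductSpace ℂ H] [CompleteSpace H]
    (b : G → H) (π : G → H ≃ₗᵢ[ℂ] H) (hb : IsWqCocycle b π)
    (hbN : ∃ C : ℝ, ∀ n ∈ N, ‖b n‖ ≤ C) :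
    IsWqCocycle (b ∘ σ) (fun x => π (σ x)) := by
  obtain ⟨C, hC⟩ := hbN
  obtain ⟨D, hD⟩ := hb.defect
  refine ⟨hb.borel_b.comp hσ_borel, fun ξ => (hb.borel_pi ξ).comp hσ_borel, ?_,
    ⟨C + 2 * D, norm_defect_comp_section_le hσ_sect hD hC⟩⟩
  intro K hK
  obtain ⟨C', hC'⟩ := hb.loc_bdd _ (hσ_reg K hK)
  exact ⟨C', fun x hx => hC' (σ x) (subset_closure ⟨x, hx, rfl⟩)⟩

/-- Let `G` be a locally compact second countable group, `N` a closed normal subgroup,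
and `σ : G/N → G` a regular Borel section of the quotient map. If `(b, π)` is a
wq-cocycle on `G` with `b` bounded on `N`, then `(b ∘ σ, π ∘ σ)` is a wq-cocycle on
`G/N`. -/
theorem wqCocycle_descends_along_section
    (G : Type) [Group G] [TopologicalSpace G] [IsTopologicalGroup G] [T2Space G]
    [LocallyCompactSpace G] [SecondCountableTopology G]
    (N : Subgroup G) [N.Normal] (hclosed : IsClosed (N : Set G))
    (σ : G ⧸ N → G)
    (hσ_borel : BorelMeasurableMap σ)
    (hσ_sect : ∀ x : G ⧸ N, (QuotientGroup.mk (σ x) : G ⧸ N) = x)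
    (hσ_reg : ∀ K : Set (G ⧸ N), IsCompact K → IsCompact (closure (σ '' K)))
    (H : Type) [NormedAddCommGroup H] [InnerProductSpace ℂ H] [CompleteSpace H]
    (b : G → H) (π : G → H ≃ₗᵢ[ℂ] H) (hb : IsWqCocycle b π)
    (hbN : ∃ C : ℝ, ∀ n ∈ N, ‖b n‖ ≤ C) :
    IsWqCocycle (b ∘ σ) (fun x => π (σ x)) :=
  wqCocycle_descends_along_section_general G N σ hσ_borel hσ_sect hσ_reg H b π hb hbN
end
end

section
/- Let Y be a measurable space, H a separable complex Hilbert space, and (f_n)_{n∈ℕ} a sequence of measurable functions Y → H. Then there exists a sequence (a_n)_{n∈ℕ} of measurable functions Y → H such that for every y ∈ Y: each a_n(y) is either the zero vector or a unit vector, the nonzero vectors among (a_n(y))_{n∈ℕ} form an orthonormal family, and for every n ∈ ℕ the linear span of {a_0(y), …, a_n(y)} equals the linear span of {f_0(y), …, f_n(y)}. -/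
/-!
Run the Gram–Schmidt process pointwise in `y`. Each Gram–Schmidt vector is obtained from `f n`
and the earlier Gram–Schmidt vectors by inner products, norms, division, scalar multiplication
and finite sums. These operations are Borel measurable once `H` is second countable, which
follows from separability, so measurability passes through the recursion by well-founded
induction.
-/

open Finset InnerProductSpace

theorem InnerProductSpace.gramSchmidt_eq_sub_sum {𝕜 E ι : Type*} [RCLike 𝕜]
    [NormedAddCommGroup E] [InnerProductSpace 𝕜 E]
    [LinearOrder ι] [LocallyFiniteOrderBot ι] [WellFoundedLT ι] (f : ι → E) (n : ι) :
    gramSchmidt 𝕜 f n = f n - ∑ i ∈ Iio n,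
      (inner 𝕜 (gramSchmidt 𝕜 f i) (f n) / (‖gramSchmidt 𝕜 f i‖ : 𝕜) ^ 2) •
        gramSchmidt 𝕜 f i :=
  eq_sub_of_add_eq (gramSchmidt_def'' 𝕜 f n).symm

section Measurable

variable {Y 𝕜 E ι : Type*} [MeasurableSpace Y] [RCLike 𝕜]
  [NormedAddCommGroup E] [InnerProductSpace 𝕜 E]
  [MeasurableSpace E] [BorelSpace E] [SecondCountableTopology E]
  [LinearOrder ι] [LocallyFiniteOrderBot ι] [WellFoundedLT ι] {f : ι → Y → E}

theorem measurable_gramSchmidt (hf : ∀ i, Measurable (f i)) (n : ι) :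
    Measurable fun y => gramSchmidt 𝕜 (f · y) n := by
  induction n using WellFoundedLT.induction with
  | _ n ih =>
    rw [funext fun y => gramSchmidt_eq_sub_sum (f · y) n]
    refine (hf n).sub (Finset.measurable_sum _ fun i hi => ?_)
    have hi := ih i (Finset.mem_Iio.1 hi)
    fun_prop

theorem measurable_gramSchmidtNormed (hf : ∀ i, Measurable (f i)) (n : ι) :
    Measurable fun y => gramSchmidtNormed 𝕜 (f · y) n := by
  have h := measurable_gramSchmidt (𝕜 := 𝕜) hf n
  unfold gramSchmidtNormed
  fun_prop

end Measurable

section Pointwise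

variable {𝕜 E ι : Type*} [RCLike 𝕜] [NormedAddCommGroup E] [InnerProductSpace 𝕜 E]
  [LinearOrder ι] [LocallyFiniteOrderBot ι] [WellFoundedLT ι]

theorem InnerProductSpace.gramSchmidtNormed_eq_zero_or_norm_eq_one (f : ι → E) (n : ι) :
    gramSchmidtNormed 𝕜 f n = 0 ∨ ‖gramSchmidtNormed 𝕜 f n‖ = 1 :=
  or_iff_not_imp_left.2 gramSchmidtNormed_unit_length'

theorem InnerProductSpace.inner_gramSchmidtNormed_eq_zero (f : ι → E) {m n : ι} (h : m ≠ n) :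
    inner 𝕜 (gramSchmidtNormed 𝕜 f m) (gramSchmidtNormed 𝕜 f n) = 0 := by
  simp [gramSchmidtNormed, inner_smul_left, inner_smul_right, gramSchmidt_orthogonal 𝕜 f h]

theorem InnerProductSpace.span_gramSchmidtNormed_Iic (f : ι → E) (n : ι) :
    Submodule.span 𝕜 (gramSchmidtNormed 𝕜 f '' Set.Iic n) =
      Submodule.span 𝕜 (f '' Set.Iic n) := by
  rw [span_gramSchmidtNormed, span_gramSchmidt_Iic]

end Pointwise

/-- Measurable Gram–Schmidt: given a sequence of measurable functions `f n : Y → H` into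
a separable complex Hilbert space, there is a sequence of measurable functions
`a n : Y → H` such that for every `y` each `a n y` is zero or a unit vector, the vectors
`a m y` and `a n y` for `m ≠ n` are orthogonal (so the nonzero ones form an orthonormal
family), and for each `n` the span of `a 0 y, …, a n y` equals the span of
`f 0 y, …, f n y`. -/
theorem measurable_gram_schmidt
    (Y : Type) [MeasurableSpace Y]
    (H : Type) [NormedAddCommGroup H] [InnerProductSpace ℂ H]
    [TopologicalSpace.SeparableSpace H] [MeasurableSpace H] [BorelSpace H]
    (f : ℕ → Y → H) (hf : ∀ n, Measurable (f n)) :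
    ∃ a : ℕ → Y → H,
      (∀ n, Measurable (a n)) ∧
      ∀ y : Y,
        (∀ n, a n y = 0 ∨ ‖a n y‖ = 1) ∧
        (∀ m n : ℕ, m ≠ n → (inner ℂ (a m y) (a n y) : ℂ) = 0) ∧
        ∀ n : ℕ, Submodule.span ℂ ((fun i => a i y) '' Set.Iic n) =
          Submodule.span ℂ ((fun i => f i y) '' Set.Iic n) := by
  have : SecondCountableTopology H := UniformSpace.secondCountable_of_separable H
  exact ⟨fun n y => gramSchmidtNormed ℂ (f · y) n, measurable_gramSchmidtNormed hf,
    fun y => ⟨gramSchmidtNormed_eq_zero_or_norm_eq_one _,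
      fun _ _ => inner_gramSchmidtNormed_eq_zero _, span_gramSchmidtNormed_Iic _⟩⟩
end
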